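/- arXiv:1910.00799 — 2 statements merged into one kernel-verified Lean document; each statement's English description precedes it below -/
import Mathlib

section
/- Let Z be an integrable ℝ^q-valued random vector, and for i = 1,…,q let Z_{−i} denote the vector obtained from Z by removing the i-th coordinate. Assume the symmetric conditional laws property: for each i = 1,…,q, the conditional laws of Z_i and −Z_i given Z_{−i} coincide a.s. Then for all real numbers with |λ_i| ≤ |ℓ_i| (i = 1,…,q), Diag(λ_1,…,λ_q) Z ≤_cvx Diag(ℓ_1,…,ℓ_q) Z. -/
/-!
Fix a convex `φ` of linear growth and all scalings but the `i`-th. Then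
`s ↦ E φ(Diag(c[i ↦ s]) Z)` is convex, and it is even because flipping the sign of `Z_i` does
not change the law of `Z`. An even convex function on `ℝ` is nondecreasing in `|s|`, so the
scalings can be raised from `|λ_i|` to `|ℓ_i|` one coordinate at a time.
-/

open MeasureTheory ProbabilityTheory
open scoped ENNReal

noncomputable section

abbrev Euc (d : ℕ) : Type := EuclideanSpace ℝ (Fin d)

/-- Convex order `X ≤_cvx Y` between random vectors (tested on convex functions with linear
growth). -/
def cvxLE {Ω F : Type*} [MeasurableSpace Ω] [NormedAddCommGroup F] [NormedSpace ℝ F]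
    (P : Measure Ω) (X Y : Ω → F) : Prop :=
  ∀ φ : F → ℝ, ConvexOn ℝ Set.univ φ → (∃ C : ℝ, ∀ x, |φ x| ≤ C * (1 + ‖x‖)) →
    ∫ ω, φ (X ω) ∂P ≤ ∫ ω, φ (Y ω) ∂P

open Function Matrix Set

theorem ConvexOn.apply_le_apply_of_abs_le {f : ℝ → ℝ} (hf : ConvexOn ℝ univ f) (heven : f.Even)
    {s t : ℝ} (hst : |s| ≤ |t|) : f s ≤ f t := by
  have habs : f |t| = f t := by rcases abs_choice t with h | h <;> simp [h, heven t]
  have hmem : s ∈ segment ℝ (-|t|) |t| := by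
    rw [segment_eq_Icc (by simp)]
    exact abs_le.mp hst
  simpa [heven |t|, habs] using hf.le_on_segment (mem_univ _) (mem_univ _) hmem

theorem apply_le_apply_of_forall_update_le {ι α β : Type*} [Fintype ι] [DecidableEq ι]
    [Preorder β]
    {G : (ι → α) → β} {r : α → α → Prop}
    (hG : ∀ c i s t, r s t → G (update c i s) ≤ G (update c i t))
    {a b : ι → α} (hab : ∀ i, r (a i) (b i)) : G a ≤ G b := by
  classical
  suffices ∀ S : Finset ι, G a ≤ G (S.piecewise b a) by simpa using this Finset.univ
  intro S
  induction S using Finset.induction_on with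
  | empty => simp
  | insert i S hi ih =>
    rw [Finset.piecewise_insert]
    calc G a ≤ G (S.piecewise b a) := ih
      _ = G (update (S.piecewise b a) i (a i)) := by rw [update_eq_self_iff.mpr (by simp [hi])]
      _ ≤ G (update (S.piecewise b a) i (b i)) := hG _ _ _ _ (hab i)

theorem MeasureTheory.Integrable.comp_of_abs_le_linear {Ω F : Type*} [MeasurableSpace Ω]
    [NormedAddCommGroup F] {μ : Measure Ω} [IsFiniteMeasure μ] {X : Ω → F} (hX : Integrable X μ)
    {φ : F → ℝ} (hφ : Continuous φ) {C : ℝ} (hC : ∀ x, |φ x| ≤ C * (1 + ‖x‖)) :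
    Integrable (fun ω => φ (X ω)) μ :=
  (((integrable_const 1).add hX.norm).const_mul C).mono' (hφ.comp_aestronglyMeasurable hX.1)
    (ae_of_all _ fun ω => hC (X ω))

theorem convexOn_integral_comp_add_smul {Ω F : Type*} [MeasurableSpace Ω] [NormedAddCommGroup F]
    [NormedSpace ℝ F] {μ : Measure Ω} {φ : F → ℝ} (hφ : ConvexOn ℝ univ φ) {X Y : Ω → F}
    (hint : ∀ s : ℝ, Integrable (fun ω => φ (X ω + s • Y ω)) μ) :
    ConvexOn ℝ univ fun s : ℝ => ∫ ω, φ (X ω + s • Y ω) ∂μ := by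
  refine ⟨convex_univ, fun s _ t _ a b ha hb hab => ?_⟩
  have hpt : ∀ ω, φ (X ω + (a • s + b • t) • Y ω)
      ≤ a • φ (X ω + s • Y ω) + b • φ (X ω + t • Y ω) := fun ω => by
    have hcomb : X ω + (a • s + b • t) • Y ω = a • (X ω + s • Y ω) + b • (X ω + t • Y ω) := by
      obtain rfl : b = 1 - a := by linarith
      module
    rw [hcomb]
    exact hφ.2 (mem_univ _) (mem_univ _) ha hb hab
  calc ∫ ω, φ (X ω + (a • s + b • t) • Y ω) ∂μ
      ≤ ∫ ω, a • φ (X ω + s • Y ω) + b • φ (X ω + t • Y ω) ∂μ :=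
        integral_mono (hint _) (((hint s).smul a).add ((hint t).smul b)) hpt
    _ = a • ∫ ω, φ (X ω + s • Y ω) ∂μ + b • ∫ ω, φ (X ω + t • Y ω) ∂μ := by
        rw [integral_add, integral_smul, integral_smul]
        exacts [(hint s).smul a, (hint t).smul b]

local notation:max "Diag " c:max => toEuclideanCLM (𝕜 := ℝ) (diagonal c)

section Diagonal

variable {ι : Type*} [Fintype ι] [DecidableEq ι]

@[simp]
theorem toEuclideanCLM_diagonal_apply (c : ι → ℝ) (x : EuclideanSpace ℝ ι) (i : ι) :
    (Diag c x) i = c i * x i := by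
  simp [mulVec_diagonal]

theorem toEuclideanCLM_diagonal_update_eq_add_smul (c : ι → ℝ) (i : ι) (s : ℝ)
    (x : EuclideanSpace ℝ ι) :
    Diag (update c i s) x = Diag (update c i 0) x + s • Diag (Pi.single i 1) x := by
  ext j
  by_cases h : j = i <;> simp [h]

theorem toEuclideanCLM_diagonal_update_neg (c : ι → ℝ) (i : ι) (s : ℝ)
    (x : EuclideanSpace ℝ ι) :
    Diag (update c i (-s)) x = Diag (update c i s) (Diag (update 1 i (-1)) x) := by
  ext j
  by_cases h : j = i <;> simp [h]

variable {Ω : Type*} [MeasurableSpace Ω] {P : Measure Ω} {Z : Ω → EuclideanSpace ℝ ι}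

theorem identDistrib_toEuclideanCLM_diagonal_update_neg_one (hZ : AEMeasurable Z P) (i : ι)
    (hsym : P.map (fun ω => (Z ω i, fun j : {j // j ≠ i} => Z ω j.1))
      = P.map (fun ω => (-Z ω i, fun j : {j // j ≠ i} => Z ω j.1))) :
    IdentDistrib Z (fun ω => Diag (update 1 i (-1)) (Z ω)) P P := by
  let glue : ℝ × ({j // j ≠ i} → ℝ) → EuclideanSpace ℝ ι :=
    fun p => WithLp.toLp 2 fun j => if h : j = i then p.1 else p.2 ⟨j, h⟩
  have hglue : Measurable glue :=
    ((PiLp.continuous_toLp 2 _).comp (continuous_pi fun j => by split_ifs <;> fun_prop)).measurable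
  have hpair : IdentDistrib (fun ω => (Z ω i, fun j : {j // j ≠ i} => Z ω j.1))
      (fun ω => (-Z ω i, fun j : {j // j ≠ i} => Z ω j.1)) P P :=
    ⟨by fun_prop, by fun_prop, hsym⟩
  convert hpair.comp hglue using 1 <;> ext ω j <;> by_cases h : j = i <;> simp [glue, h]

theorem integral_comp_toEuclideanCLM_diagonal_update_le [IsFiniteMeasure P] (hZ : Integrable Z P)
    {i : ι}
    (hsym : P.map (fun ω => (Z ω i, fun j : {j // j ≠ i} => Z ω j.1))
      = P.map (fun ω => (-Z ω i, fun j : {j // j ≠ i} => Z ω j.1)))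
    {φ : EuclideanSpace ℝ ι → ℝ} (hφ : ConvexOn ℝ univ φ) {C : ℝ}
    (hC : ∀ x, |φ x| ≤ C * (1 + ‖x‖)) (c : ι → ℝ) {s t : ℝ} (hst : |s| ≤ |t|) :
    ∫ ω, φ (Diag (update c i s) (Z ω)) ∂P ≤ ∫ ω, φ (Diag (update c i t) (Z ω)) ∂P := by
  have hφc : Continuous φ := continuousOn_univ.mp (hφ.continuousOn isOpen_univ)
  have hconv : ConvexOn ℝ univ fun s => ∫ ω, φ (Diag (update c i s) (Z ω)) ∂P := by
    have hint s : Integrable (fun ω => φ (Diag (update c i s) (Z ω))) P :=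
      ((Diag (update c i s)).integrable_comp hZ).comp_of_abs_le_linear hφc hC
    convert convexOn_integral_comp_add_smul hφ (X := fun ω => Diag (update c i 0) (Z ω))
      (Y := fun ω => Diag (Pi.single i 1) (Z ω)) (fun s => ?_) using 5 with s ω
    · exact toEuclideanCLM_diagonal_update_eq_add_smul c i s (Z ω)
    · simpa only [← toEuclideanCLM_diagonal_update_eq_add_smul] using hint s
  have heven : Function.Even fun s => ∫ ω, φ (Diag (update c i s) (Z ω)) ∂P := fun s => by
    simp_rw [toEuclideanCLM_diagonal_update_neg c i s]
    exact (((identDistrib_toEuclideanCLM_diagonal_update_neg_one hZ.aemeasurable i hsym).comp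
      (hφc.comp (Diag (update c i s)).continuous).measurable).integral_eq).symm
  exact hconv.apply_le_apply_of_abs_le heven hst

end Diagonal

/-- The symmetric conditional laws property is encoded as equality of the joint laws of
`(Z_i, Z_{-i})` and `(-Z_i, Z_{-i})`. -/
theorem stmt13_general {Ω : Type*} [mΩ : MeasurableSpace Ω] (P : Measure Ω) [IsProbabilityMeasure P]
    (q : ℕ) (Z : Ω → Euc q)
    (hZint : Integrable Z P)
    (hsym : ∀ i : Fin q,
      P.map (fun ω => ((Z ω i : ℝ), (fun j : {j : Fin q // j ≠ i} => Z ω j.1)))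
        = P.map (fun ω => (-(Z ω i), (fun j : {j : Fin q // j ≠ i} => Z ω j.1))))
    (lam ell : Fin q → ℝ) (hle : ∀ i, |lam i| ≤ |ell i|) :
    cvxLE P (fun ω => (WithLp.toLp 2 (fun i => lam i * Z ω i) : Euc q))
      (fun ω => (WithLp.toLp 2 (fun i => ell i * Z ω i) : Euc q)) := by
  rintro φ hφ ⟨C, hC⟩
  have hdiag : ∀ (c : Fin q → ℝ) ω, WithLp.toLp 2 (fun i => c i * Z ω i) = Diag c (Z ω) :=
    fun c ω => by ext i; simp
  simp only [hdiag]
  exact apply_le_apply_of_forall_update_le (G := fun c => ∫ ω, φ (Diag c (Z ω)) ∂P)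
    (fun c i _ _ hst => integral_comp_toEuclideanCLM_diagonal_update_le hZint (hsym i) hφ hC c hst)
    hle

/-- If for each coordinate `i` the conditional laws of `Z_i` and `-Z_i`
given `Z_{-i}` coincide (equivalently, `(Z_i, Z_{-i})` and `(-Z_i, Z_{-i})` have the same
joint law) and `|λ_i| ≤ |ℓ_i|`, then `Diag(λ₁,…,λ_q) Z ≤_cvx Diag(ℓ₁,…,ℓ_q) Z`. -/
theorem stmt13 {Ω : Type*} [mΩ : MeasurableSpace Ω] (P : Measure Ω) [IsProbabilityMeasure P]
    (q : ℕ) (Z : Ω → Euc q)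
    (hZm : Measurable Z) (hZint : Integrable Z P)
    (hsym : ∀ i : Fin q,
      P.map (fun ω => ((Z ω i : ℝ), (fun j : {j : Fin q // j ≠ i} => Z ω j.1)))
        = P.map (fun ω => (-(Z ω i), (fun j : {j : Fin q // j ≠ i} => Z ω j.1))))
    (lam ell : Fin q → ℝ) (hle : ∀ i, |lam i| ≤ |ell i|) :
    cvxLE P (fun ω => (WithLp.toLp 2 (fun i => lam i * Z ω i) : Euc q))
      (fun ω => (WithLp.toLp 2 (fun i => ell i * Z ω i) : Euc q)) :=
  stmt13_general (mΩ := mΩ) P q Z hZint hsym lam ell hle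

end
end

section
/- Let Z be an integrable ℝ^q-valued random vector with a radial distribution, i.e. OZ has the same law as Z for every orthogonal q×q matrix O, and let A, B ∈ M_{d,q}(ℝ). If AA* ≤ BB* in the Loewner order (i.e. BB* − AA* is positive semidefinite), then AZ ≤_cvx BZ. Conversely, if in addition 0 < E|Z|² < ∞, then AZ ≤_cvx BZ implies AA* ≤ BB*. -/
/-!
Douglas' lemma turns `AAᵀ ≤ BBᵀ` into a factorisation `A = BK` with `‖K‖ ≤ 1`, and by the
singular value decomposition such a contraction is a convex combination of orthogonal
matrices, because the cube `[-1, 1]^q` is the convex hull of the sign vectors. For convex `φ`,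
the map `M ↦ E φ(BMZ)` is convex and, `Z` being radial, constant on the orthogonal group;
hence `E φ(AZ) = E φ(BKZ) ≤ E φ(BZ)`.

Conversely, testing the convex order on `x ↦ |⟪v, x⟫|` gives `E |⟪Aᵀv, Z⟫| ≤ E |⟪Bᵀv, Z⟫|`.
By radial symmetry `E |⟪u, Z⟫| = c ‖u‖`, with `c > 0` unless `Z = 0` almost surely, so
`‖Aᵀv‖ ≤ ‖Bᵀv‖` for every `v`, which is `AAᵀ ≤ BBᵀ`.
-/

open MeasureTheory ProbabilityTheory
open scoped ENNReal

noncomputable section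

/-- Action of a `d×q` matrix on a vector of `ℝ^q`. -/
def matVec {d q : ℕ} (A : Matrix (Fin d) (Fin q) ℝ) (z : Euc q) : Euc d :=
  WithLp.toLp 2 (fun i => ∑ j, A i j * z j)

open Matrix Set
open scoped Matrix.Norms.L2Operator RealInnerProductSpace

theorem LinearMap.exists_comp_eq_of_forall_norm_le {𝕜 E F G : Type*} [RCLike 𝕜] [AddCommGroup E]
    [Module 𝕜 E] [NormedAddCommGroup F] [InnerProductSpace 𝕜 F] [FiniteDimensional 𝕜 F]
    [NormedAddCommGroup G] [NormedSpace 𝕜 G] {f : E →ₗ[𝕜] G} {g : E →ₗ[𝕜] F}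
    (h : ∀ x, ‖f x‖ ≤ ‖g x‖) : ∃ L : F →ₗ[𝕜] G, L ∘ₗ g = f ∧ ∀ y, ‖L y‖ ≤ ‖y‖ := by
  have hker : ker g ≤ ker f := fun x hx ↦ by
    have := h x
    rwa [mem_ker.1 hx, norm_zero, norm_le_zero_iff, ← mem_ker] at this
  let π := (range g).orthogonalProjectionOnto
  -- `L` inverts `g` on its range and vanishes on the orthogonal complement
  let L : F →ₗ[𝕜] G :=
    (ker g).liftQ f hker ∘ₗ g.quotKerEquivRange.symm.toLinearMap ∘ₗ π.toLinearMap
  have hLg : ∀ x, L (g x) = f x := fun x ↦ by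
    simp [L, π, Submodule.orthogonalProjectionOnto_mem_subspace_eq_self ⟨g x, mem_range_self g x⟩,
      quotKerEquivRange_symm_apply_image]
  refine ⟨L, LinearMap.ext hLg, fun y ↦ ?_⟩
  obtain ⟨x, hx⟩ := (π y).2
  have hπy : π y = π (g x) := by
    rw [Submodule.orthogonalProjectionOnto_mem_subspace_eq_self ⟨g x, mem_range_self g x⟩]
    exact Subtype.ext hx.symm
  calc ‖L y‖ = ‖L (g x)‖ := by
        simp only [L, coe_comp, Function.comp_apply, ContinuousLinearMap.coe_coe, hπy]
    _ ≤ ‖g x‖ := (hLg x).symm ▸ h x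
    _ = ‖(π y : F)‖ := by rw [hx]
    _ ≤ ‖y‖ := (range g).norm_orthogonalProjectionOnto_apply_le y

theorem exists_orthonormalBasis_norm_smul_eq_of_pairwise_inner_eq_zero {ι E : Type*} [Fintype ι]
    [NormedAddCommGroup E] [InnerProductSpace ℝ E] [FiniteDimensional ℝ E]
    (h : Module.finrank ℝ E = Fintype.card ι) {f : ι → E} (hf : Pairwise fun i j ↦ ⟪f i, f j⟫ = 0) :
    ∃ b : OrthonormalBasis ι ℝ E, ∀ i, ‖f i‖ • b i = f i := by
  let e := Fintype.equivFin ι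
  let b := InnerProductSpace.gramSchmidtOrthonormalBasis (h.trans (Fintype.card_fin _).symm)
    (f ∘ e.symm)
  refine ⟨b.reindex e.symm, fun i ↦ ?_⟩
  rcases eq_or_ne (f i) 0 with hi | hi
  · simp [hi]
  have hfe : Pairwise fun i j ↦ ⟪(f ∘ e.symm) i, (f ∘ e.symm) j⟫ = 0 :=
    fun i j hij ↦ hf (e.symm.injective.ne hij)
  rw [OrthonormalBasis.reindex_apply, Equiv.symm_symm,
    InnerProductSpace.gramSchmidtOrthonormalBasis_apply_of_orthogonal _ hfe (by simpa using hi)]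
  simp [smul_smul, hi]

namespace Matrix

variable {m n : Type*} [Fintype m] [DecidableEq m] [Fintype n]

theorem dotProduct_mul_transpose_mulVec (M : Matrix m n ℝ) (x : EuclideanSpace ℝ m) :
    x.ofLp ⬝ᵥ (M * Mᵀ) *ᵥ x.ofLp = ‖toEuclideanLin Mᵀ x‖ ^ 2 := by
  rw [← real_inner_self_eq_norm_sq, EuclideanSpace.inner_eq_star_dotProduct, star_trivial,
    ← mulVec_mulVec, dotProduct_mulVec, ← mulVec_transpose]
  rfl

theorem posSemidef_mul_transpose_sub_mul_transpose_iff (A B : Matrix m n ℝ) :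
    (B * Bᵀ - A * Aᵀ).PosSemidef ↔ ∀ x, ‖toEuclideanLin Aᵀ x‖ ≤ ‖toEuclideanLin Bᵀ x‖ := by
  have hsymm : (B * Bᵀ - A * Aᵀ).IsHermitian := by
    simpa only [conjTranspose_eq_transpose_of_trivial] using
      (isHermitian_mul_conjTranspose_self B).sub (isHermitian_mul_conjTranspose_self A)
  rw [posSemidef_iff_dotProduct_mulVec, and_iff_right hsymm,
    (WithLp.equiv 2 (m → ℝ)).symm.forall_congr_left]
  refine forall_congr' fun x ↦ ?_
  rw [star_trivial, sub_mulVec, dotProduct_sub, sub_nonneg, Equiv.symm_symm, WithLp.equiv_apply,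
    dotProduct_mul_transpose_mulVec, dotProduct_mul_transpose_mulVec,
    pow_le_pow_iff_left₀ (norm_nonneg _) (norm_nonneg _) two_ne_zero]

theorem exists_eq_mul_norm_le_one_of_posSemidef_sub [DecidableEq n] {A B : Matrix m n ℝ}
    (h : (B * Bᵀ - A * Aᵀ).PosSemidef) : ∃ K : Matrix n n ℝ, A = B * K ∧ ‖K‖ ≤ 1 := by
  obtain ⟨L, hLB, hL⟩ := LinearMap.exists_comp_eq_of_forall_norm_le
    ((posSemidef_mul_transpose_sub_mul_transpose_iff A B).1 h)
  refine ⟨(toEuclideanLin.symm L)ᵀ, ?_, ?_⟩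
  · rw [← transpose_transpose A, ← toEuclideanLin.symm_apply_apply Aᵀ, ← hLB,
      toLpLin_symm_comp (q := 2), LinearEquiv.symm_apply_apply, transpose_mul, transpose_transpose]
  · rw [← conjTranspose_eq_transpose_of_trivial, l2_opNorm_conjTranspose, l2_opNorm_def]
    exact ContinuousLinearMap.opNorm_le_bound _ zero_le_one fun y ↦ by simpa using hL y

theorem exists_mem_orthogonalGroup_mul_diagonal_mul [DecidableEq n] {K : Matrix n n ℝ}
    (hK : ‖K‖ ≤ 1) :
    ∃ U ∈ orthogonalGroup n ℝ, ∃ V ∈ orthogonalGroup n ℝ, ∃ σ : n → ℝ,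
      (∀ i, |σ i| ≤ 1) ∧ K = U * diagonal σ * V := by
  -- the images under `K` of an eigenbasis of `KᴴK` are orthogonal; normalising them gives `U`
  have hH : (Kᴴ * K).IsHermitian := isHermitian_conjTranspose_mul_self K
  set v := hH.eigenvectorBasis
  set f : n → EuclideanSpace ℝ n := fun j ↦ toEuclideanLin K (v j)
  have hf : Pairwise fun i j ↦ ⟪f i, f j⟫ = 0 := fun i j hij ↦ by
    have hv : toEuclideanLin (Kᴴ * K) (v j) = hH.eigenvalues j • v j := by
      rw [toLpLin_apply, hH.mulVec_eigenvectorBasis]; rfl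
    calc ⟪f i, f j⟫ = ⟪v i, toEuclideanLin (Kᴴ * K) (v j)⟫ := by
          rw [toLpLin_mul_same, LinearMap.comp_apply, toEuclideanLin_conjTranspose_eq_adjoint,
            LinearMap.adjoint_inner_right]
      _ = 0 := by rw [hv, real_inner_smul_right, v.orthonormal.2 hij, mul_zero]
  obtain ⟨b, hb⟩ := exists_orthonormalBasis_norm_smul_eq_of_pairwise_inner_eq_zero
    (finrank_euclideanSpace (𝕜 := ℝ)) hf
  set V := hH.eigenvectorUnitary
  refine ⟨(EuclideanSpace.basisFun n ℝ).toBasis.toMatrix b,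
    (EuclideanSpace.basisFun n ℝ).toMatrix_orthonormalBasis_mem_orthogonal b,
    star (V : Matrix n n ℝ), Unitary.star_mem V.2, fun j ↦ ‖f j‖, fun j ↦ ?_, ?_⟩
  · calc |‖f j‖| = ‖f j‖ := abs_norm _
      _ ≤ ‖K‖ * ‖v j‖ := by
        rw [l2_opNorm_def]
        exact ((toEuclideanLin ≪≫ₗ LinearMap.toContinuousLinearMap) K).le_opNorm _
      _ ≤ 1 := by rw [v.norm_eq_one, mul_one]; exact hK
  · have hKV :
        K * V = (EuclideanSpace.basisFun n ℝ).toBasis.toMatrix b * diagonal fun j ↦ ‖f j‖ := by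
      ext i j
      rw [mul_diagonal, Module.Basis.toMatrix_apply, OrthonormalBasis.coe_toBasis_repr_apply,
        EuclideanSpace.basisFun_repr, mul_comm,
        show ‖f j‖ * (b j).ofLp i = (‖f j‖ • b j).ofLp i from rfl, hb]
      simp [f, v, V, mul_apply, toLpLin_apply, mulVec, dotProduct]
    rw [← hKV, mul_assoc, Unitary.mul_star_self_of_mem V.2, mul_one]

theorem diagonal_mem_convexHull_orthogonalGroup [DecidableEq n] {σ : n → ℝ}
    (hσ : ∀ i, |σ i| ≤ 1) :
    diagonal σ ∈ convexHull ℝ (orthogonalGroup n ℝ : Set (Matrix n n ℝ)) := by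
  have hsigns : diagonalLinearMap n ℝ ℝ '' univ.pi (fun _ ↦ {-1, 1}) ⊆ orthogonalGroup n ℝ := by
    rintro _ ⟨ε, hε, rfl⟩
    change diagonal ε ∈ orthogonalGroup n ℝ
    rw [mem_orthogonalGroup_iff, diagonal_transpose, diagonal_mul_diagonal, ← diagonal_one]
    congr 1
    funext i
    obtain h | h : ε i = -1 ∨ ε i = 1 := hε i trivial <;> simp [h]
  refine convexHull_mono hsigns ?_
  rw [← LinearMap.image_convexHull, convexHull_pi]
  refine ⟨σ, fun i _ ↦ ?_, rfl⟩
  rw [convexHull_pair, segment_eq_Icc (by norm_num)]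
  exact abs_le.1 (hσ i)

theorem mul_mul_mem_convexHull_orthogonalGroup [DecidableEq n] {U X V : Matrix n n ℝ}
    (hU : U ∈ orthogonalGroup n ℝ)
    (hX : X ∈ convexHull ℝ (orthogonalGroup n ℝ : Set (Matrix n n ℝ)))
    (hV : V ∈ orthogonalGroup n ℝ) :
    U * X * V ∈ convexHull ℝ (orthogonalGroup n ℝ : Set (Matrix n n ℝ)) := by
  let φ := LinearMap.mulLeft ℝ U ∘ₗ LinearMap.mulRight ℝ V
  have hφ : φ '' orthogonalGroup n ℝ ⊆ orthogonalGroup n ℝ := by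
    rintro _ ⟨O, hO, rfl⟩
    exact mul_mem hU (mul_mem hO hV)
  refine convexHull_mono hφ ?_
  rw [← LinearMap.image_convexHull]
  exact ⟨X, hX, (mul_assoc U X V).symm⟩

theorem mem_convexHull_orthogonalGroup_of_norm_le_one [DecidableEq n] {K : Matrix n n ℝ}
    (hK : ‖K‖ ≤ 1) :
    K ∈ convexHull ℝ (orthogonalGroup n ℝ : Set (Matrix n n ℝ)) := by
  obtain ⟨U, hU, V, hV, σ, hσ, rfl⟩ := exists_mem_orthogonalGroup_mul_diagonal_mul hK
  exact mul_mul_mem_convexHull_orthogonalGroup hU (diagonal_mem_convexHull_orthogonalGroup hσ) hV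

end Matrix

theorem MeasureTheory.Integrable.comp_of_abs_le_mul_one_add_norm {Ω E : Type*} [MeasurableSpace Ω]
    {P : Measure Ω} [IsFiniteMeasure P] [NormedAddCommGroup E] {X : Ω → E} (hX : Integrable X P)
    {φ : E → ℝ} (hφ : Continuous φ) {C : ℝ} (hC : ∀ x, |φ x| ≤ C * (1 + ‖x‖)) :
    Integrable (fun ω ↦ φ (X ω)) P :=
  (((integrable_const 1).add hX.norm).const_mul C).mono' (hφ.comp_aestronglyMeasurable hX.1)
    (ae_of_all _ fun ω ↦ hC (X ω))

theorem ConvexOn.integral_comp_linearMap {Ω V E : Type*} [MeasurableSpace Ω] {P : Measure Ω}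
    [AddCommGroup V] [Module ℝ V] [AddCommGroup E] [Module ℝ E] {φ : E → ℝ}
    (hφ : ConvexOn ℝ univ φ) (T : Ω → V →ₗ[ℝ] E) (hT : ∀ v, Integrable (fun ω ↦ φ (T ω v)) P) :
    ConvexOn ℝ univ fun v ↦ ∫ ω, φ (T ω v) ∂P := by
  refine ⟨convex_univ, fun x _ y _ a b ha hb hab ↦ ?_⟩
  calc ∫ ω, φ (T ω (a • x + b • y)) ∂P
      ≤ ∫ ω, a * φ (T ω x) + b * φ (T ω y) ∂P := by
        refine integral_mono (hT _) (((hT x).const_mul a).add ((hT y).const_mul b)) fun ω ↦ ?_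
        simpa using hφ.2 trivial trivial ha hb hab
    _ = a * ∫ ω, φ (T ω x) ∂P + b * ∫ ω, φ (T ω y) ∂P := by
        rw [integral_add ((hT x).const_mul a) ((hT y).const_mul b), integral_const_mul,
          integral_const_mul]

theorem ae_eq_zero_of_forall_integral_abs_inner_eq_zero {Ω ι : Type*} [MeasurableSpace Ω]
    {P : Measure Ω} [Fintype ι] [DecidableEq ι] {Z : Ω → EuclideanSpace ℝ ι} (hZ : Integrable Z P)
    (h : ∀ u, ∫ ω, |⟪u, Z ω⟫| ∂P = 0) : Z =ᵐ[P] 0 := by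
  have hcoord : ∀ i, ∀ᵐ ω ∂P, |⟪EuclideanSpace.single i 1, Z ω⟫| = 0 := fun i ↦
    (integral_eq_zero_iff_of_nonneg (fun _ ↦ abs_nonneg _)
      ((innerSL ℝ (EuclideanSpace.single i 1)).integrable_comp hZ).abs).1 (h _)
  filter_upwards [ae_all_iff.2 hcoord] with ω hω
  ext i
  simpa [EuclideanSpace.inner_single_left] using hω i

theorem matVec_eq_toEuclideanLin {d q : ℕ} (A : Matrix (Fin d) (Fin q) ℝ) :
    matVec A = toEuclideanLin A :=
  rfl

theorem inner_matVec {d q : ℕ} (A : Matrix (Fin d) (Fin q) ℝ) (v : Euc d) (z : Euc q) :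
    ⟪v, matVec A z⟫ = ⟪toEuclideanLin Aᵀ v, z⟫ := by
  rw [← conjTranspose_eq_transpose_of_trivial, toEuclideanLin_conjTranspose_eq_adjoint,
    LinearMap.adjoint_inner_left]
  rfl

def IsRadial {Ω : Type*} [MeasurableSpace Ω] (P : Measure Ω) {q : ℕ} (Z : Ω → Euc q) :
    Prop :=
  ∀ O : Matrix (Fin q) (Fin q) ℝ, O * O.transpose = 1 → P.map (fun ω ↦ matVec O (Z ω)) = P.map Z

namespace IsRadial

variable {Ω : Type*} [MeasurableSpace Ω] {P : Measure Ω} {d q : ℕ} {Z : Ω → Euc q}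

theorem integral_comp_matVec (hZ : IsRadial P Z) (hZm : AEMeasurable Z P)
    {O : Matrix (Fin q) (Fin q) ℝ} (hO : O ∈ orthogonalGroup (Fin q) ℝ) {ψ : Euc q → ℝ}
    (hψ : Continuous ψ) : ∫ ω, ψ (matVec O (Z ω)) ∂P = ∫ ω, ψ (Z ω) ∂P := by
  have hOZ : AEMeasurable (fun ω ↦ matVec O (Z ω)) P :=
    (toEuclideanLin O).continuous_of_finiteDimensional.aemeasurable.comp_aemeasurable hZm
  rw [← integral_map hOZ hψ.aestronglyMeasurable, hZ O ((mem_orthogonalGroup_iff _ _).1 hO),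
    integral_map hZm hψ.aestronglyMeasurable]

theorem integral_abs_inner_eq_of_norm_eq (hZ : IsRadial P Z) (hZm : AEMeasurable Z P)
    {u v : Euc q} (h : ‖u‖ = ‖v‖) : ∫ ω, |⟪u, Z ω⟫| ∂P = ∫ ω, |⟪v, Z ω⟫| ∂P := by
  -- the reflection in the hyperplane orthogonal to `v - u` maps `v` to `u`
  let R := (ℝ ∙ (v - u))ᗮ.reflection
  let b := EuclideanSpace.basisFun (Fin q) ℝ
  have hR : ∀ z, matVec (LinearMap.toMatrix b.toBasis b.toBasis R.toLinearEquiv) z = R z :=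
      fun z ↦ by
    rw [matVec_eq_toEuclideanLin, toEuclideanLin_eq_toLin_orthonormal, toLin_toMatrix]
    rfl
  rw [← hZ.integral_comp_matVec hZm (ψ := fun z ↦ |⟪u, z⟫|) (R.toMatrix_mem_unitaryGroup b b)
    (continuous_const.inner continuous_id).abs]
  refine integral_congr_ae (ae_of_all _ fun ω ↦ ?_)
  simp only [hR]
  rw [← R.inner_map_map v, Submodule.reflection_sub h.symm]

theorem integral_abs_inner_eq_norm_mul (hZ : IsRadial P Z) (hZm : AEMeasurable Z P)
    {e : Euc q} (he : ‖e‖ = 1) (u : Euc q) :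
    ∫ ω, |⟪u, Z ω⟫| ∂P = ‖u‖ * ∫ ω, |⟪e, Z ω⟫| ∂P := by
  rw [hZ.integral_abs_inner_eq_of_norm_eq hZm (v := ‖u‖ • e)
    (by rw [norm_smul, he, norm_norm, mul_one]), ← integral_const_mul]
  simp_rw [real_inner_smul_left, abs_mul, abs_norm]

theorem norm_le_norm_of_integral_abs_inner_le (hZ : IsRadial P Z) (hZint : Integrable Z P)
    (hZ0 : ¬Z =ᵐ[P] 0) {u v : Euc q} (h : ∫ ω, |⟪u, Z ω⟫| ∂P ≤ ∫ ω, |⟪v, Z ω⟫| ∂P) :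
    ‖u‖ ≤ ‖v‖ := by
  rcases eq_or_ne u 0 with rfl | hu
  · simp
  have he : ‖(‖u‖⁻¹ • u)‖ = 1 := by simpa using norm_smul_inv_norm (𝕜 := ℝ) hu
  have hpos : 0 < ∫ ω, |⟪‖u‖⁻¹ • u, Z ω⟫| ∂P := by
    refine (integral_nonneg fun _ ↦ abs_nonneg _).lt_of_ne fun h0 ↦ hZ0 ?_
    refine ae_eq_zero_of_forall_integral_abs_inner_eq_zero hZint fun w ↦ ?_
    rw [hZ.integral_abs_inner_eq_norm_mul hZint.1.aemeasurable he, ← h0, mul_zero]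
  rw [hZ.integral_abs_inner_eq_norm_mul hZint.1.aemeasurable he u,
    hZ.integral_abs_inner_eq_norm_mul hZint.1.aemeasurable he v] at h
  exact le_of_mul_le_mul_right h hpos

theorem cvxLE_matVec_of_posSemidef [IsFiniteMeasure P] (hZ : IsRadial P Z)
    (hZint : Integrable Z P) {A B : Matrix (Fin d) (Fin q) ℝ} (h : (B * Bᵀ - A * Aᵀ).PosSemidef) :
    cvxLE P (fun ω ↦ matVec A (Z ω)) (fun ω ↦ matVec B (Z ω)) := by
  rintro φ hφ ⟨C, hC⟩
  obtain ⟨K, rfl, hK⟩ := exists_eq_mul_norm_le_one_of_posSemidef_sub h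
  have hφc : Continuous φ := hφ.locallyLipschitz.continuous
  let g (M : Matrix (Fin q) (Fin q) ℝ) := ∫ ω, φ (toEuclideanLin B (toEuclideanLin M (Z ω))) ∂P
  have hg : ConvexOn ℝ univ g := by
    refine (hφ.comp_linearMap (toEuclideanLin B)).integral_comp_linearMap
      (fun ω ↦ LinearMap.applyₗ (Z ω) ∘ₗ toEuclideanLin.toLinearMap) fun M ↦ ?_
    exact ((toEuclideanLin B ∘ₗ toEuclideanLin M).toContinuousLinearMap.integrable_comp
      hZint).comp_of_abs_le_mul_one_add_norm hφc hC
  obtain ⟨O, hO, hKO⟩ := hg.exists_ge_of_mem_convexHull (subset_univ _)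
    (mem_convexHull_orthogonalGroup_of_norm_le_one hK)
  calc ∫ ω, φ (matVec (B * K) (Z ω)) ∂P = g K := by simp [g, matVec_eq_toEuclideanLin]
    _ ≤ g O := hKO
    _ = ∫ ω, φ (matVec B (Z ω)) ∂P := hZ.integral_comp_matVec hZint.1.aemeasurable hO
      (hφc.comp (toEuclideanLin B).continuous_of_finiteDimensional)

theorem posSemidef_of_cvxLE_matVec (hZ : IsRadial P Z) (hZint : Integrable Z P)
    (hZ2 : 0 < ∫ ω, ‖Z ω‖ ^ 2 ∂P) {A B : Matrix (Fin d) (Fin q) ℝ}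
    (h : cvxLE P (fun ω ↦ matVec A (Z ω)) (fun ω ↦ matVec B (Z ω))) :
    (B * Bᵀ - A * Aᵀ).PosSemidef := by
  have hZ0 : ¬Z =ᵐ[P] 0 := fun h0 ↦
    hZ2.ne' (integral_eq_zero_of_ae (h0.mono fun ω hω ↦ by simp [hω]))
  refine (posSemidef_mul_transpose_sub_mul_transpose_iff A B).2 fun v ↦
    hZ.norm_le_norm_of_integral_abs_inner_le hZint hZ0 ?_
  have hconv : ConvexOn ℝ univ fun x : Euc d ↦ |⟪v, x⟫| := by
    simpa [Function.comp_def] using convexOn_univ_norm.comp_linearMap (innerₛₗ ℝ v)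
  have hgrowth : ∀ x : Euc d, |(|⟪v, x⟫|)| ≤ ‖v‖ * (1 + ‖x‖) := fun x ↦ by
    rw [abs_abs]
    exact (abs_real_inner_le_norm v x).trans (by nlinarith [norm_nonneg v, norm_nonneg x])
  simpa only [inner_matVec] using h _ hconv ⟨‖v‖, hgrowth⟩

end IsRadial

theorem stmt14_general {Ω : Type*} [mΩ : MeasurableSpace Ω] (P : Measure Ω) [IsProbabilityMeasure P]
    (d q : ℕ) (Z : Ω → Euc q)
    (hZint : Integrable Z P)
    (hradial : ∀ O : Matrix (Fin q) (Fin q) ℝ, O * O.transpose = 1 →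
      P.map (fun ω => matVec O (Z ω)) = P.map Z)
    (A B : Matrix (Fin d) (Fin q) ℝ) :
    (Matrix.PosSemidef (B * B.transpose - A * A.transpose) →
      cvxLE P (fun ω => matVec A (Z ω)) (fun ω => matVec B (Z ω)))
    ∧ (Integrable (fun ω => ‖Z ω‖ ^ 2) P → 0 < ∫ ω, ‖Z ω‖ ^ 2 ∂P →
        cvxLE P (fun ω => matVec A (Z ω)) (fun ω => matVec B (Z ω)) →
        Matrix.PosSemidef (B * B.transpose - A * A.transpose)) :=
  ⟨IsRadial.cvxLE_matVec_of_posSemidef hradial hZint,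
    fun _ hZ2 ↦ IsRadial.posSemidef_of_cvxLE_matVec hradial hZint hZ2⟩

/-- Let `Z` be an integrable `ℝ^q`-valued random vector with a radial
distribution. If `AA* ≤ BB*` in the Loewner order then `AZ ≤_cvx BZ`; conversely, if
moreover `0 < E|Z|² < ∞`, then `AZ ≤_cvx BZ` implies `AA* ≤ BB*`. -/
theorem stmt14 {Ω : Type*} [mΩ : MeasurableSpace Ω] (P : Measure Ω) [IsProbabilityMeasure P]
    (d q : ℕ) (Z : Ω → Euc q)
    (hZm : Measurable Z) (hZint : Integrable Z P)
    (hradial : ∀ O : Matrix (Fin q) (Fin q) ℝ, O * O.transpose = 1 →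
      P.map (fun ω => matVec O (Z ω)) = P.map Z)
    (A B : Matrix (Fin d) (Fin q) ℝ) :
    (Matrix.PosSemidef (B * B.transpose - A * A.transpose) →
      cvxLE P (fun ω => matVec A (Z ω)) (fun ω => matVec B (Z ω)))
    ∧ (Integrable (fun ω => ‖Z ω‖ ^ 2) P → 0 < ∫ ω, ‖Z ω‖ ^ 2 ∂P →
        cvxLE P (fun ω => matVec A (Z ω)) (fun ω => matVec B (Z ω)) →
        Matrix.PosSemidef (B * B.transpose - A * A.transpose)) :=
  stmt14_general (mΩ := mΩ) P d q Z hZint hradial A B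

end
end
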